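/- If T1 and T2 are independent and T2 stochastically increases in risk in group G in the sense that P(T2 < s | G) ≥ P(T2 < s | Gᶜ) for all s ≥ 0, T1 is independent of G, and T1 admits a density f1, then the group-specific discrepancy satisfies P(T2 < T1 | T1 < t, G) ≥ P(T2 < T1 | T1 < t, Gᶜ), i.e., the discrepancy gap Δ(t) ≥ 0: the group with higher competing-risk incidence suffers a larger error when the competing risk is treated as censoring. -/
import Mathlib


open MeasureTheory ProbabilityTheory

/-- If the competing event T2 is stochastically more incident in group G, the
    competing-event time pair (T2, group indicator) is independent of T1, and
    T1 has density f1, then the group-specific discrepancy is larger for G: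
    Δ(t) ≥ 0. -/
theorem higher_competing_incidence_larger_discrepancy
    {Ω : Type*} [MeasurableSpace Ω] (μ : Measure Ω) [IsProbabilityMeasure μ]
    (T1 T2 : Ω → ℝ) (hT1 : Measurable T1) (hT2 : Measurable T2)
    (hnn1 : ∀ ω, 0 ≤ T1 ω) (hnn2 : ∀ ω, 0 ≤ T2 ω)
    (G : Set Ω) (hG : MeasurableSet G)
    (hGpos : 0 < (μ G).toReal) (hGlt : (μ G).toReal < 1)
    (hindep : IndepFun T1 (fun ω => (T2 ω, G.indicator (fun _ => (1:ℝ)) ω)) μ)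
    (f1 : ℝ → ℝ) (hf1 : Measurable f1) (hf1nn : ∀ s, 0 ≤ f1 s)
    (hdensity : Measure.map T1 μ
      = (volume : Measure ℝ).withDensity (fun s => ENNReal.ofReal (f1 s)))
    (t : ℝ) (hpos : 0 < (μ {ω | T1 ω < t}).toReal)
    (hposG : 0 < (μ (G ∩ {ω | T1 ω < t})).toReal)
    (hposGc : 0 < (μ (Gᶜ ∩ {ω | T1 ω < t})).toReal)
    (hstoch : ∀ s : ℝ, 0 ≤ s →
      (μ (Gᶜ ∩ {ω | T2 ω < s})).toReal / (μ Gᶜ).toReal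
        ≤ (μ (G ∩ {ω | T2 ω < s})).toReal / (μ G).toReal) :
    (μ (Gᶜ ∩ {ω | T2 ω < T1 ω ∧ T1 ω < t})).toReal
        / (μ (Gᶜ ∩ {ω | T1 ω < t})).toReal
      ≤ (μ (G ∩ {ω | T2 ω < T1 ω ∧ T1 ω < t})).toReal
        / (μ (G ∩ {ω | T1 ω < t})).toReal := by
  classical
  set Y : Ω → ℝ × ℝ := fun ω => (T2 ω, G.indicator (fun _ => (1:ℝ)) ω) with hYdef
  have hY : Measurable Y := hT2.prodMk (measurable_const.indicator hG)
  have hmap : Measure.map (fun ω => (T1 ω, Y ω)) μ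
      = (Measure.map T1 μ).prod (Measure.map Y μ) :=
    (indepFun_iff_map_prod_eq_prod_map_map hT1.aemeasurable hY.aemeasurable).mp hindep
  have hind1 : ∀ ω, (G.indicator (fun _ => (1:ℝ)) ω = 1) ↔ ω ∈ G := by
    intro ω; by_cases h : ω ∈ G <;> simp [Set.indicator, h]
  have hind0 : ∀ ω, (G.indicator (fun _ => (1:ℝ)) ω = 0) ↔ ω ∈ Gᶜ := by
    intro ω; by_cases h : ω ∈ G <;> simp [Set.indicator, h]
  -- positivity of complements in real terms
  have hGcfin : μ Gᶜ ≠ ⊤ := measure_ne_top μ Gᶜ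
  have hGfin : μ G ≠ ⊤ := measure_ne_top μ G
  have hsum : (μ G).toReal + (μ Gᶜ).toReal = 1 := by
    have h := measure_add_measure_compl (μ := μ) hG
    have : ((μ G) + (μ Gᶜ)).toReal = (1 : ENNReal).toReal := by
      rw [h]; simp
    rwa [ENNReal.toReal_add hGfin hGcfin] at this
  have hGcpos : 0 < (μ Gᶜ).toReal := by linarith
  -- generic formula for the joint event as an integral over map T1 μ
  have key : ∀ (E : Set Ω), MeasurableSet E → ∀ v : ℝ,
      (∀ ω, G.indicator (fun _ => (1:ℝ)) ω = v ↔ ω ∈ E) →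
      μ (E ∩ {ω | T2 ω < T1 ω ∧ T1 ω < t})
        = ∫⁻ s, (Measure.map Y μ) {q : ℝ × ℝ | q.2 = v ∧ q.1 < s ∧ s < t}
            ∂(Measure.map T1 μ) := by
    intro E hE v hv
    have hSm : MeasurableSet {p : ℝ × (ℝ × ℝ) | p.2.2 = v ∧ p.2.1 < p.1 ∧ p.1 < t} := by
      apply MeasurableSet.inter
      · exact (measurable_snd.comp measurable_snd) (measurableSet_singleton v)
      · apply MeasurableSet.inter
        · exact measurableSet_lt (measurable_fst.comp measurable_snd) measurable_fst
        · exact measurable_fst measurableSet_Iio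
    have hpre : (fun ω => (T1 ω, Y ω)) ⁻¹'
        {p : ℝ × (ℝ × ℝ) | p.2.2 = v ∧ p.2.1 < p.1 ∧ p.1 < t}
        = E ∩ {ω | T2 ω < T1 ω ∧ T1 ω < t} := by
      ext ω
      simp only [Set.mem_preimage, Set.mem_setOf_eq, Set.mem_inter_iff, hYdef]
      rw [hv ω] <;> tauto
    calc μ (E ∩ {ω | T2 ω < T1 ω ∧ T1 ω < t})
        = Measure.map (fun ω => (T1 ω, Y ω)) μ
            {p : ℝ × (ℝ × ℝ) | p.2.2 = v ∧ p.2.1 < p.1 ∧ p.1 < t} := by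
          rw [Measure.map_apply (hT1.prodMk hY) hSm, hpre]
      _ = ((Measure.map T1 μ).prod (Measure.map Y μ))
            {p : ℝ × (ℝ × ℝ) | p.2.2 = v ∧ p.2.1 < p.1 ∧ p.1 < t} := by rw [hmap]
      _ = ∫⁻ s, (Measure.map Y μ) {q : ℝ × ℝ | q.2 = v ∧ q.1 < s ∧ s < t}
            ∂(Measure.map T1 μ) := Measure.prod_apply hSm
  -- identification of sections
  have hsec : ∀ (E : Set Ω), MeasurableSet E → ∀ v : ℝ,
      (∀ ω, G.indicator (fun _ => (1:ℝ)) ω = v ↔ ω ∈ E) → ∀ s : ℝ, s < t →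
      (Measure.map Y μ) {q : ℝ × ℝ | q.2 = v ∧ q.1 < s ∧ s < t}
        = μ (E ∩ {ω | T2 ω < s}) := by
    intro E hE v hv s hst
    have hm : MeasurableSet {q : ℝ × ℝ | q.2 = v ∧ q.1 < s ∧ s < t} := by
      have heq : {q : ℝ × ℝ | q.2 = v ∧ q.1 < s ∧ s < t}
          = {q : ℝ × ℝ | q.2 = v} ∩ {q : ℝ × ℝ | q.1 < s} := by
        ext q; simp [hst]
      rw [heq]
      exact (measurable_snd (measurableSet_singleton v)).inter
        (measurable_fst measurableSet_Iio)
    rw [Measure.map_apply hY hm]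
    congr 1
    ext ω
    simp only [Set.mem_preimage, Set.mem_setOf_eq, Set.mem_inter_iff, hYdef]
    rw [hv ω] <;> tauto
  -- pointwise inequality
  have hpt : ∀ s : ℝ,
      μ G * (Measure.map Y μ) {q : ℝ × ℝ | q.2 = 0 ∧ q.1 < s ∧ s < t}
        ≤ μ Gᶜ * (Measure.map Y μ) {q : ℝ × ℝ | q.2 = 1 ∧ q.1 < s ∧ s < t} := by
    intro s
    by_cases hst : s < t
    · rw [hsec G hG 1 hind1 s hst, hsec Gᶜ hG.compl 0 hind0 s hst]
      by_cases hs : 0 ≤ s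
      · have h := hstoch s hs
        have hcross := (div_le_div_iff₀ hGcpos hGpos).mp h
        rw [← ENNReal.toReal_le_toReal (by finiteness) (by finiteness),
          ENNReal.toReal_mul, ENNReal.toReal_mul]
        nlinarith [ENNReal.toReal_nonneg (a := μ (G ∩ {ω | T2 ω < s}))]
      · have hempty : {ω | T2 ω < s} = ∅ := by
          ext ω; simp only [Set.mem_setOf_eq, Set.mem_empty_iff_false, iff_false, not_lt]
          exact le_trans (le_of_not_ge hs) (hnn2 ω)
        simp [hempty]
    · have h0 : {q : ℝ × ℝ | q.2 = 0 ∧ q.1 < s ∧ s < t} = ∅ := by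
        ext q; simp [hst]
      simp [h0]
  -- integrated inequality
  have hmono : μ G * μ (Gᶜ ∩ {ω | T2 ω < T1 ω ∧ T1 ω < t})
      ≤ μ Gᶜ * μ (G ∩ {ω | T2 ω < T1 ω ∧ T1 ω < t}) := by
    rw [key Gᶜ hG.compl 0 hind0, key G hG 1 hind1,
      ← lintegral_const_mul' _ _ hGfin, ← lintegral_const_mul' _ _ hGcfin]
    exact lintegral_mono hpt
  -- denominators factor
  have hB : ∀ (E : Set Ω), MeasurableSet E → ∀ v : ℝ,
      (∀ ω, G.indicator (fun _ => (1:ℝ)) ω = v ↔ ω ∈ E) →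
      μ (E ∩ {ω | T1 ω < t}) = μ {ω | T1 ω < t} * μ E := by
    intro E hE v hv
    have hEpre : Y ⁻¹' {q : ℝ × ℝ | q.2 = v} = E := by
      ext ω; simp only [Set.mem_preimage, Set.mem_setOf_eq, hYdef]; exact hv ω
    have hT1pre : T1 ⁻¹' Set.Iio t = {ω | T1 ω < t} := rfl
    have := hindep.measure_inter_preimage_eq_mul (Set.Iio t) {q : ℝ × ℝ | q.2 = v}
      measurableSet_Iio (measurable_snd (measurableSet_singleton v))
    rw [hEpre, hT1pre] at this
    rw [Set.inter_comm, this]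
  have hBG := hB G hG 1 hind1
  have hBGc := hB Gᶜ hG.compl 0 hind0
  -- final real arithmetic
  rw [hBG] at hposG ⊢
  rw [hBGc] at hposGc ⊢
  set A := (μ (G ∩ {ω | T2 ω < T1 ω ∧ T1 ω < t})).toReal with hA
  set Ac := (μ (Gᶜ ∩ {ω | T2 ω < T1 ω ∧ T1 ω < t})).toReal with hAc
  have hmonoR : (μ G).toReal * Ac ≤ (μ Gᶜ).toReal * A := by
    have := ENNReal.toReal_mono (by finiteness) hmono
    rwa [ENNReal.toReal_mul, ENNReal.toReal_mul] at this
  simp only [ENNReal.toReal_mul] at hposG hposGc ⊢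
  rw [div_le_div_iff₀ (by positivity) (by positivity)]
  have hTpos : 0 < (μ {ω | T1 ω < t}).toReal := hpos
  nlinarith [ENNReal.toReal_nonneg (a := μ G), ENNReal.toReal_nonneg (a := μ Gᶜ)]
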